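/- Let (a_k)_{k≥0} be a nondecreasing sequence in [0,1] with lim_{k→∞} a_k = 1, and fix integers s ≤ t. Define, for n ∈ ℤ, K_n := the unique k ≥ 0 with a_{k−1} ≤ U_n < a_k (convention a_{−1} := 0); K_n is a.s. finite. For integers m ≤ s′ ≤ t′ define Z[s′,t′] := max{K_n − n + s′ : n ∈ [s′,t′]} (which is ≥ 0), and set Y_{−1} := t + 1, Y_0 := s, and Y_n := Y_{n−1} − Z[Y_{n−1}, Y_{n−2} − 1] for n ≥ 1. Then ℙ-almost surely τ[s,t] = lim_{n→∞} Y_n = max{Y_n : Y_n = Y_{n+1}}, with the conventions max ∅ = −∞ and that both sides equal −∞ when Y_n → −∞. -/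

import Mathlib

open MeasureTheory Filter

/-- Regeneration time `τ[s,t]`. -/
noncomputable def tau (a : ℕ → ℝ) (u : ℤ → ℝ) (s t : ℤ) : WithBot ℤ :=
  sSup {x : WithBot ℤ | ∃ m : ℤ, x = (m : WithBot ℤ) ∧ m ≤ s ∧
    ∀ j : ℤ, m ≤ j → j ≤ t → u j < a (j - m).toNat}

/-- The coordinates are i.i.d. uniform on `[0,1)` under `μ`. -/
def IsIIDUniform (μ : Measure (ℤ → ℝ)) : Prop :=
  ProbabilityTheory.iIndepFun (m := fun _ : ℤ => (inferInstance : MeasurableSpace ℝ))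
    (fun i (u : ℤ → ℝ) => u i) μ ∧
  ∀ i : ℤ, μ.map (fun u => u i) = volume.restrict (Set.Ico (0:ℝ) 1)

/-- `K_n`: the unique `k ≥ 0` with `a_{k-1} ≤ U_n < a_k` (for a nondecreasing
sequence `a`), i.e. the smallest `k` with `U_n < a_k`; junk value if no such `k`. -/
noncomputable def KK (a : ℕ → ℝ) (u : ℤ → ℝ) (n : ℤ) : ℕ := sInf {k : ℕ | u n < a k}

/-- `Z[s',t'] := max {K_n - n + s' : n ∈ [s',t']}`. -/
noncomputable def Z (a : ℕ → ℝ) (u : ℤ → ℝ) (s' t' : ℤ) : ℤ :=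
  sSup {z : ℤ | ∃ n : ℤ, s' ≤ n ∧ n ≤ t' ∧ z = (KK a u n : ℤ) - n + s'}

/-- The pair `(Y_{n-1}, Y_n)` of the backward recursion `Y_{-1} = t+1`, `Y_0 = s`,
`Y_n = Y_{n-1} - Z[Y_{n-1}, Y_{n-2} - 1]`. -/
noncomputable def Ypair (a : ℕ → ℝ) (u : ℤ → ℝ) (s t : ℤ) : ℕ → ℤ × ℤ
  | 0 => (t + 1, s)
  | n + 1 =>
    ((Ypair a u s t n).2,
      (Ypair a u s t n).2 - Z a u (Ypair a u s t n).2 ((Ypair a u s t n).1 - 1))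

/-- `Y_n` of the backward recursion. -/
noncomputable def Y (a : ℕ → ℝ) (u : ℤ → ℝ) (s t : ℤ) (n : ℕ) : ℤ :=
  (Ypair a u s t n).2

/-!
A point `m ≤ s` is admissible for `τ[s,t]` iff `K_j ≤ j - m` for all `j ∈ [m, t]`. The
recursion keeps two facts: every admissible `m` satisfies `m ≤ Y_n`, and every site of
`[Y_n, t]` satisfies `K_j ≤ j - Y_{n+1}`. So if `Y_N = Y_{N+1}` then `Y_N` is itself
admissible, hence equals `τ[s,t]`, and the sequence is constant from `N` on; otherwise `Y`
decreases strictly to `-∞` and nothing is admissible. Almost surely every `U_n < 1`, so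
`a_k → 1` makes every `K_n` finite.
-/

section Renewal

variable {a : ℕ → ℝ} {u : ℤ → ℝ} {s t s' t' m : ℤ}

lemma lt_a_KK {n : ℤ} (h : {k : ℕ | u n < a k}.Nonempty) : u n < a (KK a u n) :=
  Nat.sInf_mem h

lemma KK_le_of_lt {n : ℤ} {k : ℕ} (h : u n < a k) : KK a u n ≤ k :=
  Nat.sInf_le h

lemma bddAbove_Z_set :
    BddAbove {z : ℤ | ∃ n : ℤ, s' ≤ n ∧ n ≤ t' ∧ z = (KK a u n : ℤ) - n + s'} := by
  refine (((Set.finite_Icc s' t').image fun n : ℤ => (KK a u n : ℤ) - n + s').bddAbove).mono ?_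
  rintro _ ⟨n, h₁, h₂, rfl⟩
  exact ⟨n, ⟨h₁, h₂⟩, rfl⟩

lemma le_Z {n : ℤ} (h₁ : s' ≤ n) (h₂ : n ≤ t') : (KK a u n : ℤ) - n + s' ≤ Z a u s' t' :=
  le_csSup bddAbove_Z_set ⟨n, h₁, h₂, rfl⟩

lemma Z_of_lt (h : t' < s') : Z a u s' t' = 0 := by
  have : {z : ℤ | ∃ n : ℤ, s' ≤ n ∧ n ≤ t' ∧ z = (KK a u n : ℤ) - n + s'} = ∅ :=
    Set.eq_empty_of_forall_notMem fun _ ⟨n, h₁, h₂, _⟩ => by omega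
  rw [Z, this, Int.csSup_empty]

lemma Z_nonneg : 0 ≤ Z a u s' t' := by
  rcases le_or_gt s' t' with h | h
  · have := le_Z (a := a) (u := u) le_rfl h
    omega
  · exact (Z_of_lt h).ge

lemma Z_le_sub (hm : m ≤ s') (h : ∀ j, s' ≤ j → j ≤ t' → u j < a (j - m).toNat) :
    Z a u s' t' ≤ s' - m := by
  rcases le_or_gt s' t' with hst' | hst'
  · refine csSup_le ⟨_, s', le_rfl, hst', rfl⟩ ?_
    rintro _ ⟨j, h₁, h₂, rfl⟩
    have := KK_le_of_lt (h j h₁ h₂)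
    omega
  · rw [Z_of_lt hst']
    omega

lemma Y_zero : Y a u s t 0 = s := rfl

lemma Ypair_fst_zero : (Ypair a u s t 0).1 = t + 1 := rfl

lemma Ypair_fst_succ (n : ℕ) : (Ypair a u s t (n + 1)).1 = Y a u s t n := rfl

lemma Y_succ (n : ℕ) :
    Y a u s t (n + 1) = Y a u s t n - Z a u (Y a u s t n) ((Ypair a u s t n).1 - 1) := rfl

lemma Y_succ_le (n : ℕ) : Y a u s t (n + 1) ≤ Y a u s t n := by
  rw [Y_succ]
  linarith [Z_nonneg (a := a) (u := u) (s' := Y a u s t n) (t' := (Ypair a u s t n).1 - 1)]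

lemma Y_antitone : Antitone (Y a u s t) :=
  antitone_nat_of_succ_le Y_succ_le

lemma Y_le (n : ℕ) : Y a u s t n ≤ s :=
  Y_antitone n.zero_le

lemma Y_succ_le_sub_KK (n : ℕ) {j : ℤ} (h₁ : Y a u s t n ≤ j) (h₂ : j ≤ t) :
    Y a u s t (n + 1) ≤ j - KK a u j := by
  induction n generalizing j with
  | zero =>
    rw [Y_zero] at h₁
    have := le_Z (a := a) (u := u) h₁ h₂
    rw [Y_succ, Y_zero, Ypair_fst_zero, add_sub_cancel_right]
    omega
  | succ n ih =>
    rcases le_or_gt (Y a u s t n) j with h | h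
    · linarith [ih h h₂, Y_succ_le (a := a) (u := u) (s := s) (t := t) (n + 1)]
    · have := le_Z (a := a) (u := u) h₁ (Int.le_sub_one_of_lt h)
      rw [Y_succ, Ypair_fst_succ]
      omega

def IsAdmissible (a : ℕ → ℝ) (u : ℤ → ℝ) (s t m : ℤ) : Prop :=
  m ≤ s ∧ ∀ j : ℤ, m ≤ j → j ≤ t → u j < a (j - m).toNat

lemma tau_eq_sSup : tau a u s t = sSup ((↑) '' {m | IsAdmissible a u s t m}) := by
  refine congrArg sSup (Set.ext fun x => ?_)
  exact ⟨fun ⟨m, hx, hm⟩ => ⟨m, hm, hx.symm⟩, fun ⟨m, hm, hx⟩ => ⟨m, hx.symm, hm⟩⟩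

lemma tau_eq_of_isGreatest (h : IsGreatest {m | IsAdmissible a u s t m} m) :
    tau a u s t = m := by
  rw [tau_eq_sSup, (WithBot.coe_mono.map_isGreatest h).csSup_eq]

lemma tau_eq_bot (h : ∀ m, ¬ IsAdmissible a u s t m) : tau a u s t = ⊥ := by
  have : {m | IsAdmissible a u s t m} = ∅ := Set.eq_empty_of_forall_notMem h
  rw [tau_eq_sSup, this, Set.image_empty, csSup_empty]

lemma IsAdmissible.le_Y (hst : s ≤ t) (hm : IsAdmissible a u s t m) (n : ℕ) :
    m ≤ Y a u s t n := by
  induction n with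
  | zero => exact hm.1
  | succ n ih =>
    have hlast : (Ypair a u s t n).1 - 1 ≤ t := by
      cases n with
      | zero => rw [Ypair_fst_zero]; omega
      | succ n => rw [Ypair_fst_succ]; linarith [Y_le (a := a) (u := u) (s := s) (t := t) n]
    have := Z_le_sub ih fun j h₁ h₂ => hm.2 j (ih.trans h₁) (h₂.trans hlast)
    rw [Y_succ]
    omega

lemma isAdmissible_Y (hmono : Monotone a) (hK : ∀ n : ℤ, {k : ℕ | u n < a k}.Nonempty)
    {N : ℕ} (hN : Y a u s t N = Y a u s t (N + 1)) : IsAdmissible a u s t (Y a u s t N) := by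
  refine ⟨Y_le N, fun j h₁ h₂ => (lt_a_KK (hK j)).trans_le (hmono ?_)⟩
  have := Y_succ_le_sub_KK N h₁ h₂
  omega

lemma Y_succ_succ_eq {n : ℕ} (h : Y a u s t n = Y a u s t (n + 1)) :
    Y a u s t (n + 2) = Y a u s t (n + 1) := by
  rw [Y_succ, Ypair_fst_succ, Z_of_lt (by omega), sub_zero]

lemma Y_eq_of_le {N n : ℕ} (hN : Y a u s t N = Y a u s t (N + 1)) (hn : N ≤ n) :
    Y a u s t n = Y a u s t N := by
  have hstable : ∀ k, N ≤ k → Y a u s t k = Y a u s t (k + 1) := fun k hk =>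
    Nat.le_induction hN (fun k _ h => (Y_succ_succ_eq h).symm) k hk
  induction n, hn using Nat.le_induction with
  | base => rfl
  | succ k hk ih => rw [← hstable k hk, ih]

lemma Y_le_sub_of_ne (h : ∀ n, Y a u s t n ≠ Y a u s t (n + 1)) (n : ℕ) :
    Y a u s t n ≤ s - n := by
  induction n with
  | zero => simp [Y_zero]
  | succ n ih =>
    have := lt_of_le_of_ne (Y_succ_le n) (h n).symm
    push_cast
    omega

lemma tendsto_Y_atBot (h : ∀ n, Y a u s t n ≠ Y a u s t (n + 1)) :
    Tendsto (Y a u s t) atTop atBot := by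
  refine tendsto_atBot_mono (Y_le_sub_of_ne h) ?_
  simpa [sub_eq_add_neg] using
    tendsto_atBot_add_const_left _ s (tendsto_neg_atTop_atBot.comp tendsto_natCast_atTop_atTop)

lemma tau_eq_Y_of_eq (hmono : Monotone a) (hst : s ≤ t)
    (hK : ∀ n : ℤ, {k : ℕ | u n < a k}.Nonempty) {N : ℕ}
    (hN : Y a u s t N = Y a u s t (N + 1)) : tau a u s t = Y a u s t N :=
  tau_eq_of_isGreatest ⟨isAdmissible_Y hmono hK hN, fun _ hm => hm.le_Y hst N⟩

lemma isGreatest_stable_Y (hmono : Monotone a) (hst : s ≤ t)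
    (hK : ∀ n : ℤ, {k : ℕ | u n < a k}.Nonempty) {N : ℕ}
    (hN : Y a u s t N = Y a u s t (N + 1)) :
    IsGreatest {x : WithBot ℤ | ∃ n : ℕ, Y a u s t n = Y a u s t (n + 1) ∧
      x = (Y a u s t n : WithBot ℤ)} (Y a u s t N : WithBot ℤ) := by
  refine ⟨⟨N, hN, rfl⟩, ?_⟩
  rintro _ ⟨n, hn, rfl⟩
  exact WithBot.coe_le_coe.2 ((isAdmissible_Y hmono hK hn).le_Y hst N)

lemma tau_eq_bot_of_ne (hst : s ≤ t) (h : ∀ n, Y a u s t n ≠ Y a u s t (n + 1)) :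
    tau a u s t = ⊥ := by
  refine tau_eq_bot fun m hm => ?_
  obtain ⟨n, hn⟩ := ((tendsto_Y_atBot h).eventually (eventually_lt_atBot m)).exists
  exact (hm.le_Y hst n).not_gt hn

end Renewal

lemma ae_forall_lt_one {ι : Type*} [Countable ι] {μ : Measure (ι → ℝ)}
    (h : ∀ i, μ.map (fun u => u i) = volume.restrict (Set.Ico (0 : ℝ) 1)) :
    ∀ᵐ u ∂μ, ∀ i, u i < 1 := by
  refine ae_all_iff.2 fun i => ae_of_ae_map (f := fun u : ι → ℝ => u i) (p := (· < 1))
    (measurable_pi_apply i).aemeasurable ?_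
  rw [h i]
  filter_upwards [ae_restrict_mem measurableSet_Ico] with x hx using hx.2

lemma nonempty_lt_of_tendsto {a : ℕ → ℝ} (hlim : Tendsto a atTop (nhds 1)) {x : ℝ} (hx : x < 1) :
    {k : ℕ | x < a k}.Nonempty :=
  (hlim.eventually (eventually_gt_nhds hx)).exists

theorem stmt19_general (a : ℕ → ℝ) (hmono : Monotone a)
    (hlim : Tendsto a atTop (nhds 1))
    (μ : Measure (ℤ → ℝ)) (hiid : IsIIDUniform μ)
    (s t : ℤ) (hst : s ≤ t) :
    ∀ᵐ u ∂μ,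
      (∀ n : ℤ, {k : ℕ | u n < a k}.Nonempty) ∧
      tau a u s t =
        sSup {x : WithBot ℤ | ∃ n : ℕ, Y a u s t n = Y a u s t (n + 1) ∧
          x = (Y a u s t n : WithBot ℤ)} ∧
      (∀ m : ℤ, tau a u s t = (m : WithBot ℤ) → ∀ᶠ n in atTop, Y a u s t n = m) ∧
      (tau a u s t = ⊥ → Tendsto (Y a u s t) atTop atBot) := by
  filter_upwards [ae_forall_lt_one hiid.2] with u hu
  have hK (n : ℤ) : {k : ℕ | u n < a k}.Nonempty := nonempty_lt_of_tendsto hlim (hu n)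
  refine ⟨hK, ?_⟩
  by_cases hstab : ∃ N, Y a u s t N = Y a u s t (N + 1)
  · obtain ⟨N, hN⟩ := hstab
    have htau := tau_eq_Y_of_eq hmono hst hK hN
    refine ⟨htau.trans (isGreatest_stable_Y hmono hst hK hN).csSup_eq.symm, fun m hm => ?_,
      fun hbot => absurd (htau.symm.trans hbot) WithBot.coe_ne_bot⟩
    rw [htau, WithBot.coe_inj] at hm
    exact eventually_atTop.2 ⟨N, fun n hn => (Y_eq_of_le hN hn).trans hm⟩
  · replace hstab := not_exists.1 hstab
    have htau := tau_eq_bot_of_ne hst hstab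
    have hnone : {x : WithBot ℤ | ∃ n : ℕ, Y a u s t n = Y a u s t (n + 1) ∧
        x = (Y a u s t n : WithBot ℤ)} = ∅ :=
      Set.eq_empty_of_forall_notMem fun _ ⟨n, hn, _⟩ => hstab n hn
    exact ⟨by rw [htau, hnone, csSup_empty], fun m hm => absurd (htau ▸ hm).symm WithBot.coe_ne_bot,
      fun _ => tendsto_Y_atBot hstab⟩

/-- `ℙ`-a.s. the `K_n` are finite (well defined) and
`τ[s,t] = lim_n Y_n = max {Y_n : Y_n = Y_{n+1}}`, with `max ∅ = -∞` and all three
expressions equal to `-∞` when `Y_n → -∞`. -/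
theorem stmt19 (a : ℕ → ℝ) (ha : ∀ k, a k ∈ Set.Icc (0:ℝ) 1) (hmono : Monotone a)
    (hlim : Tendsto a atTop (nhds 1))
    (μ : Measure (ℤ → ℝ)) [IsProbabilityMeasure μ] (hiid : IsIIDUniform μ)
    (s t : ℤ) (hst : s ≤ t) :
    ∀ᵐ u ∂μ,
      (∀ n : ℤ, {k : ℕ | u n < a k}.Nonempty) ∧
      tau a u s t =
        sSup {x : WithBot ℤ | ∃ n : ℕ, Y a u s t n = Y a u s t (n + 1) ∧
          x = (Y a u s t n : WithBot ℤ)} ∧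
      (∀ m : ℤ, tau a u s t = (m : WithBot ℤ) → ∀ᶠ n in atTop, Y a u s t n = m) ∧
      (tau a u s t = ⊥ → Tendsto (Y a u s t) atTop atBot) :=
  stmt19_general a hmono hlim μ hiid s t hst
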